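/- Let d ≥ 2 be an integer, 0 < Λ ≤ 1, and a = arcsin Λ. Then inf_{χ ∈ Γ_{ς,ς}} ∫_{[0,π/2]²} (1 + κ_Λ(φ + ψ)) dχ(φ, ψ) ≥ 2Λ [ cos(a/2) · b_d/(2 b_{d−1}) − ((d − 1)/d) sin(a/2) − (a/2)(a/2 − sin(a/2)) ]. -/

import Mathlib

open MeasureTheory Real Set

noncomputable section

/-- `b d` is the volume of the unit ball in `ℝ^d`. -/
def ballVol (d : ℕ) : ℝ := Real.pi ^ ((d : ℝ) / 2) / Real.Gamma ((d : ℝ) / 2 + 1)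

/-- `f_{θ,Λ}(η) = cos(θ + 2η) + 2Λ sin η`. -/
def fFun (θ Λ η : ℝ) : ℝ := Real.cos (θ + 2 * η) + 2 * Λ * Real.sin η

/-- `κ_Λ(θ) = inf_{η ∈ [0,(π−θ)/2]} f_{θ,Λ}(η)`. -/
def kappaFun (Λ θ : ℝ) : ℝ := sInf (fFun θ Λ '' Set.Icc 0 ((Real.pi - θ) / 2))

/-- The measure `ς_d` on `[0, π/2]` with density `(d−1) sin^{d−2}φ cos φ`. -/
def sigmaMeasure (d : ℕ) : Measure ℝ :=
  (volume.restrict (Set.Icc 0 (Real.pi / 2))).withDensity fun φ =>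
    ENNReal.ofReal (((d : ℝ) - 1) * Real.sin φ ^ (d - 2) * Real.cos φ)

/-- `Γ_{ς,ς}`: measures on the square whose marginals equal `ς_d`. -/
def GammaSigmaSigma (d : ℕ) : Set (Measure (ℝ × ℝ)) :=
  {χ | χ.map Prod.fst = sigmaMeasure d ∧ χ.map Prod.snd = sigmaMeasure d}

end

/-! With `Λ = sin a`, for `φ, ψ ∈ [0, π/2]` the integrand is bounded below by a sum of a function
of `φ` and the same function of `ψ`:
`1 + κ_Λ(φ + ψ) ≥ Λ (cos (φ + a/2) + cos (ψ + a/2))`.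
Indeed `1 + f_{θ,Λ}(η) = 2 (cos² (θ/2 + η) + Λ sin η)` and
`cos (φ + a/2) + cos (ψ + a/2) = 2 cos (θ/2 + a/2) cos ((φ - ψ)/2)`, which reduces the bound to the
one-variable inequality `sin a · cos (t + a/2) ≤ cos² (t + η) + sin a · sin η`.
Integrating against any coupling `χ ∈ Γ_{ς,ς}` therefore gives `2Λ ∫ cos (x + a/2) dς_d`,
whatever `χ` is. Since `(d - 1) ∫ sin^{d-2} cos² = ∫ sin^d = b_d / (2 b_{d-1})` on `[0, π/2]`,
this moment is `cos (a/2) b_d / (2 b_{d-1}) - ((d - 1)/d) sin (a/2)`, and the remaining term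
`(a/2)(a/2 - sin (a/2))` of the claimed bound is nonnegative. -/

theorem integral_add_integral_le_of_map_eq {α β : Type*} [MeasurableSpace α] [MeasurableSpace β]
    {χ : Measure (α × β)} {μ : Measure α} {ν : Measure β} (hμ : χ.map Prod.fst = μ)
    (hν : χ.map Prod.snd = ν) {f : α → ℝ} {g : β → ℝ} {F : α × β → ℝ} (hf : Integrable f μ)
    (hg : Integrable g ν) (hF : Integrable F χ) (hle : ∀ᵐ p ∂χ, f p.1 + g p.2 ≤ F p) :
    ∫ x, f x ∂μ + ∫ y, g y ∂ν ≤ ∫ p, F p ∂χ := by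
  subst hμ hν
  have hf' : Integrable (fun p : α × β => f p.1) χ := hf.comp_measurable measurable_fst
  have hg' : Integrable (fun p : α × β => g p.2) χ := hg.comp_measurable measurable_snd
  rw [integral_map measurable_fst.aemeasurable hf.aestronglyMeasurable,
    integral_map measurable_snd.aemeasurable hg.aestronglyMeasurable, ← integral_add hf' hg']
  exact integral_mono_ae (hf'.add hg') hF hle

theorem sin_two_mul_mul_sin_le_sin_add_sq {p q : ℝ} (hp : 0 ≤ p) (hq : 0 ≤ q)
    (hpq : p + q ≤ π / 2) : sin (2 * p) * sin q ≤ sin (p + q) ^ 2 := by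
  have hsp : 0 ≤ sin p := sin_nonneg_of_nonneg_of_le_pi hp (by linarith [pi_pos])
  have hcp : 0 ≤ cos p := cos_nonneg_of_mem_Icc ⟨by linarith [pi_pos], by linarith⟩
  have hsq : 0 ≤ sin q := sin_nonneg_of_nonneg_of_le_pi hq (by linarith [pi_pos])
  rcases le_total p q with hle | hle
  · have h2p : sin (2 * p) ≤ sin (p + q) :=
      sin_le_sin_of_le_of_le_pi_div_two (by linarith [pi_pos]) hpq (by linarith)
    have hq' : sin q ≤ sin (p + q) :=
      sin_le_sin_of_le_of_le_pi_div_two (by linarith [pi_pos]) hpq (by linarith)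
    rw [sq]
    exact mul_le_mul h2p hq' hsq (hsq.trans hq')
  · -- here `q ≤ π / 4`, so `2 cos q ≥ 1` and AM-GM on the two terms of `sin (p + q)` suffices
    have hcq : 1 / 2 ≤ cos q := by
      rw [← cos_pi_div_three]
      exact cos_le_cos_of_nonneg_of_le_pi hq (by linarith [pi_pos]) (by linarith [pi_pos])
    rw [sin_two_mul, sin_add]
    nlinarith [sq_nonneg (sin p * cos q - cos p * sin q),
      mul_nonneg (mul_nonneg (mul_nonneg hsp hcp) hsq) (by linarith : 0 ≤ 2 * cos q - 1)]

theorem sin_mul_cos_add_half_le_cos_sq {a x : ℝ} (ha : 0 ≤ a) (hx : 0 ≤ x)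
    (hxa : x + a / 2 ≤ π / 2) : sin a * cos (x + a / 2) ≤ cos x ^ 2 := by
  have h := sin_two_mul_mul_sin_le_sin_add_sq (p := a / 2) (q := π / 2 - (x + a / 2))
    (by linarith) (by linarith) (by linarith)
  rwa [sin_pi_div_two_sub, mul_div_cancel₀ a two_ne_zero,
    show a / 2 + (π / 2 - (x + a / 2)) = π / 2 - x by ring, sin_pi_div_two_sub] at h

theorem cos_add_half_le_sin_add_cos {t η a : ℝ} (ht : 0 ≤ t) (hη : 0 ≤ η) (ha : 0 ≤ a)
    (h : t + η + a / 2 ≤ π / 2) : cos (t + a / 2) ≤ sin η + cos (t + η + a / 2) := by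
  have hdiff :
      cos (t + a / 2) - cos (t + η + a / 2) = 2 * sin (t + η / 2 + a / 2) * sin (η / 2) := by
    rw [cos_sub_cos, show (t + a / 2 - (t + η + a / 2)) / 2 = -(η / 2) by ring, sin_neg]
    ring_nf
  have hsin : sin η = 2 * sin (η / 2) * cos (η / 2) := by
    rw [← sin_two_mul, mul_div_cancel₀ η two_ne_zero]
  have hmono : sin (t + η / 2 + a / 2) ≤ cos (η / 2) := by
    rw [← sin_pi_div_two_sub]
    exact sin_le_sin_of_le_of_le_pi_div_two (by linarith [pi_pos]) (by linarith) (by linarith)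
  have hs : 0 ≤ sin (η / 2) := sin_nonneg_of_nonneg_of_le_pi (by linarith) (by linarith)
  nlinarith [mul_le_mul_of_nonneg_right hmono hs]

theorem sin_mul_cos_add_half_le {a t η : ℝ} (ha0 : 0 ≤ a) (ha : a ≤ π) (ht : 0 ≤ t) (hη : 0 ≤ η)
    (htη : t + η ≤ π / 2) : sin a * cos (t + a / 2) ≤ cos (t + η) ^ 2 + sin a * sin η := by
  have hsa : 0 ≤ sin a := sin_nonneg_of_nonneg_of_le_pi ha0 ha
  rcases le_total (t + η + a / 2) (π / 2) with h | h
  · have hsq := sin_mul_cos_add_half_le_cos_sq ha0 (by linarith) h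
    nlinarith [mul_le_mul_of_nonneg_left (cos_add_half_le_sin_add_cos ht hη ha0 h) hsa]
  · have hcos : cos (t + a / 2) ≤ sin η := by
      rw [← sin_pi_div_two_sub]
      exact sin_le_sin_of_le_of_le_pi_div_two (by linarith) (by linarith) (by linarith)
    nlinarith [mul_le_mul_of_nonneg_left hcos hsa, sq_nonneg (cos (t + η))]

theorem one_add_fFun (θ Λ η : ℝ) : 1 + fFun θ Λ η = 2 * (cos (θ / 2 + η) ^ 2 + Λ * sin η) := by
  rw [fFun, show θ + 2 * η = 2 * (θ / 2 + η) by ring, cos_two_mul]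
  ring

theorem sin_mul_add_le_one_add_kappaFun {a φ ψ : ℝ} (ha0 : 0 ≤ a) (ha : a ≤ π)
    (hφ : φ ∈ Icc 0 (π / 2)) (hψ : ψ ∈ Icc 0 (π / 2)) :
    sin a * (cos (φ + a / 2) + cos (ψ + a / 2)) ≤ 1 + kappaFun (sin a) (φ + ψ) := by
  obtain ⟨hφ0, hφ1⟩ := hφ
  obtain ⟨hψ0, hψ1⟩ := hψ
  rw [← sub_le_iff_le_add']
  refine le_csInf ⟨_, mem_image_of_mem _ (left_mem_Icc.2 (by linarith))⟩ ?_
  rintro _ ⟨η, ⟨hη0, hη1⟩, rfl⟩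
  rw [sub_le_iff_le_add', one_add_fFun, cos_add_cos,
    show (φ + a / 2 + (ψ + a / 2)) / 2 = (φ + ψ) / 2 + a / 2 by ring]
  have hkey := sin_mul_cos_add_half_le ha0 ha (t := (φ + ψ) / 2) (η := η)
    (by linarith) hη0 (by linarith)
  have hR : 0 ≤ cos ((φ + ψ) / 2 + η) ^ 2 + sin a * sin η :=
    add_nonneg (sq_nonneg _) (mul_nonneg (sin_nonneg_of_nonneg_of_le_pi ha0 ha)
      (sin_nonneg_of_nonneg_of_le_pi hη0 (by linarith)))
  have hδ0 : 0 ≤ cos ((φ + a / 2 - (ψ + a / 2)) / 2) :=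
    cos_nonneg_of_mem_Icc ⟨by linarith, by linarith⟩
  nlinarith [cos_le_one ((φ + a / 2 - (ψ + a / 2)) / 2), mul_le_mul_of_nonneg_left hkey hδ0]

theorem neg_le_fFun (θ Λ η : ℝ) : -(1 + 2 * |Λ|) ≤ fFun θ Λ η := by
  have h := neg_abs_le (Λ * sin η)
  rw [abs_mul] at h
  rw [fFun]
  nlinarith [neg_one_le_cos (θ + 2 * η), mul_le_of_le_one_right (abs_nonneg Λ) (abs_sin_le_one η)]

theorem abs_kappaFun_le (Λ θ : ℝ) : |kappaFun Λ θ| ≤ 1 + 2 * |Λ| := by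
  rcases le_or_gt θ π with hθ | hθ
  · have h0 : (0 : ℝ) ∈ Icc 0 ((π - θ) / 2) := left_mem_Icc.2 (by linarith)
    have hlow : ∀ y ∈ fFun θ Λ '' Icc 0 ((π - θ) / 2), -(1 + 2 * |Λ|) ≤ y := by
      rintro _ ⟨η, -, rfl⟩
      exact neg_le_fFun θ Λ η
    have hup : kappaFun Λ θ ≤ fFun θ Λ 0 := csInf_le ⟨_, hlow⟩ (mem_image_of_mem _ h0)
    have hf0 : fFun θ Λ 0 = cos θ := by simp [fFun]
    rw [abs_le]
    exact ⟨le_csInf ⟨_, mem_image_of_mem _ h0⟩ hlow,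
      hup.trans (by linarith [cos_le_one θ, abs_nonneg Λ])⟩
  · rw [kappaFun, Icc_eq_empty (by linarith), image_empty, Real.sInf_empty, abs_zero]
    positivity

theorem measurable_kappaFun (Λ : ℝ) : Measurable (kappaFun Λ) := by
  -- on `θ ≤ π` rescale `[0, (π - θ) / 2]` to `[0, 1]` and take the infimum over a fixed compact set
  set g : ℝ → ℝ → ℝ := fun θ t => fFun θ Λ (t * ((π - θ) / 2))
  have hcont : Continuous fun θ => sInf (g θ '' Icc 0 1) :=
    isCompact_Icc.continuous_sInf (by simp only [g, fFun]; fun_prop)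
  have heq : kappaFun Λ = fun θ => if θ ≤ π then sInf (g θ '' Icc 0 1) else 0 := by
    funext θ
    split_ifs with hθ
    · rw [kappaFun, ← image_image (fFun θ Λ) (· * ((π - θ) / 2)),
        image_mul_right_Icc zero_le_one (by linarith : 0 ≤ (π - θ) / 2), zero_mul, one_mul]
    · rw [kappaFun, Icc_eq_empty (by linarith), image_empty, Real.sInf_empty]
  rw [heq]
  exact Measurable.ite measurableSet_Iic hcont.measurable measurable_const

theorem ballVol_pos (n : ℕ) : 0 < ballVol n :=
  div_pos (rpow_pos_of_pos pi_pos _) (Gamma_pos_of_pos (by positivity))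

theorem ballVol_add_two (n : ℕ) : ballVol (n + 2) = 2 * π / (n + 2) * ballVol n := by
  have hΓ : Gamma ((n : ℝ) / 2 + 1) ≠ 0 := (Gamma_pos_of_pos (by positivity)).ne'
  simp only [ballVol]
  rw [show ((n + 2 : ℕ) : ℝ) / 2 = (n : ℝ) / 2 + 1 by push_cast; ring, rpow_add_one pi_ne_zero,
    Gamma_add_one (by positivity)]
  field_simp

theorem ballVol_succ_div (n : ℕ) :
    ballVol (n + 1) / (2 * ballVol n) = ∫ x in (0 : ℝ)..π / 2, sin x ^ (n + 1) := by
  have hb0 : ballVol 0 = 1 := by simp [ballVol]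
  have hb1 : ballVol 1 = 2 := by
    rw [ballVol, Nat.cast_one, Gamma_add_one one_half_pos.ne', Gamma_one_half_eq, ← sqrt_eq_rpow]
    field_simp [(sqrt_pos.2 pi_pos).ne']
  induction n using Nat.twoStepInduction with
  | zero => simp [hb0, hb1]
  | one =>
    rw [ballVol_add_two, integral_sin_sq, hb0, hb1]
    simp only [Nat.cast_zero, sin_zero, cos_pi_div_two]
    ring
  | more n ih _ =>
    rw [ballVol_add_two, ballVol_add_two, integral_sin_pow, ← ih]
    have hpos := ballVol_pos n
    simp only [sin_zero, cos_pi_div_two]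
    push_cast
    field_simp
    ring

theorem integral_sin_pow_mul_cos_sq (m : ℕ) :
    (m + 1) * ∫ x in (0 : ℝ)..π / 2, sin x ^ m * cos x ^ 2
      = ∫ x in (0 : ℝ)..π / 2, sin x ^ (m + 2) := by
  have hparts := integral_sin_pow_aux (a := 0) (b := π / 2) m
  have hcos : ∫ x in (0 : ℝ)..π / 2, sin x ^ m * cos x ^ 2
      = (∫ x in (0 : ℝ)..π / 2, sin x ^ m) - ∫ x in (0 : ℝ)..π / 2, sin x ^ (m + 2) := by
    rw [← intervalIntegral.integral_sub]
    · congr 1 with x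
      rw [cos_sq', pow_add]
      ring
    all_goals exact Continuous.intervalIntegrable (by fun_prop) _ _
  simp only [sin_zero, cos_pi_div_two, zero_pow m.succ_ne_zero, zero_mul, mul_zero, sub_zero,
    zero_add] at hparts
  rw [hcos]
  linarith

theorem integral_sin_pow_mul_cos (k : ℕ) :
    ∫ x in (0 : ℝ)..π / 2, sin x ^ k * cos x = 1 / (k + 1) := by
  have h := integral_sin_pow_mul_cos_pow_odd (a := 0) (b := π / 2) k 0
  simp only [mul_zero, zero_add, pow_one, pow_zero, mul_one, sin_zero, sin_pi_div_two] at h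
  rw [h, integral_pow]
  simp

theorem integral_sigmaMeasure (m : ℕ) (g : ℝ → ℝ) :
    ∫ x, g x ∂sigmaMeasure (m + 2) = ∫ x in (0 : ℝ)..π / 2, (m + 1) * sin x ^ m * cos x * g x := by
  rw [sigmaMeasure, integral_withDensity_eq_integral_toReal_smul (by fun_prop)
    (ae_of_all _ fun _ => ENNReal.ofReal_lt_top), integral_Icc_eq_integral_Ioc,
    intervalIntegral.integral_of_le (by positivity)]
  refine setIntegral_congr_fun measurableSet_Ioc fun x hx => ?_
  have hsin : 0 ≤ sin x := sin_nonneg_of_nonneg_of_le_pi hx.1.le (by linarith [hx.2, pi_pos])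
  have hcos : 0 ≤ cos x := cos_nonneg_of_mem_Icc ⟨by linarith [hx.1, pi_pos], hx.2⟩
  have hdens :
      ((m + 2 : ℕ) - 1 : ℝ) * sin x ^ (m + 2 - 2) * cos x = (m + 1) * sin x ^ m * cos x := by
    push_cast [Nat.add_sub_cancel]
    ring
  rw [hdens, ENNReal.toReal_ofReal (by positivity), smul_eq_mul]

theorem isProbabilityMeasure_sigmaMeasure {d : ℕ} (hd : 2 ≤ d) :
    IsProbabilityMeasure (sigmaMeasure d) := by
  obtain ⟨m, rfl⟩ := Nat.exists_eq_add_of_le' hd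
  have h := integral_sigmaMeasure m fun _ => 1
  simp only [mul_one, integral_const, smul_eq_mul] at h
  simp_rw [mul_assoc] at h
  rw [isProbabilityMeasure_iff_real, h, intervalIntegral.integral_const_mul,
    integral_sin_pow_mul_cos]
  field_simp

theorem ae_mem_Icc_sigmaMeasure (d : ℕ) : ∀ᵐ x ∂sigmaMeasure d, x ∈ Icc 0 (π / 2) :=
  (withDensity_absolutelyContinuous _ _).ae_le (ae_restrict_mem measurableSet_Icc)

theorem integral_cos_add_sigmaMeasure {d : ℕ} (hd : 2 ≤ d) (b : ℝ) :
    ∫ x, cos (x + b) ∂sigmaMeasure d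
      = cos b * (ballVol d / (2 * ballVol (d - 1))) - ((d : ℝ) - 1) / d * sin b := by
  obtain ⟨m, rfl⟩ := Nat.exists_eq_add_of_le' hd
  have hsplit : ∫ x in (0 : ℝ)..π / 2, (m + 1) * sin x ^ m * cos x * cos (x + b)
      = cos b * ((m + 1) * ∫ x in (0 : ℝ)..π / 2, sin x ^ m * cos x ^ 2)
        - sin b * ((m + 1) * ∫ x in (0 : ℝ)..π / 2, sin x ^ (m + 1) * cos x) := by
    simp only [← intervalIntegral.integral_const_mul]
    rw [← intervalIntegral.integral_sub]
    · congr 1 with x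
      rw [cos_add]
      ring
    all_goals exact Continuous.intervalIntegrable (by fun_prop) _ _
  rw [integral_sigmaMeasure, hsplit, integral_sin_pow_mul_cos_sq, integral_sin_pow_mul_cos,
    show m + 2 - 1 = m + 1 from rfl, ballVol_succ_div]
  push_cast
  field_simp
  ring

theorem two_mul_sin_mul_integral_cos_le {d : ℕ} (hd : 2 ≤ d) {a : ℝ} (ha0 : 0 ≤ a) (ha : a ≤ π)
    {χ : Measure (ℝ × ℝ)} (hχ : χ ∈ GammaSigmaSigma d) :
    2 * sin a * ∫ x, cos (x + a / 2) ∂sigmaMeasure d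
      ≤ ∫ p, (1 + kappaFun (sin a) (p.1 + p.2)) ∂χ := by
  have := isProbabilityMeasure_sigmaMeasure hd
  have : IsProbabilityMeasure χ := by
    rw [← hχ.1] at this
    exact Measure.isProbabilityMeasure_of_map Prod.fst
  have hcos : Integrable (fun x => cos (x + a / 2)) (sigmaMeasure d) :=
    .of_bound (by fun_prop) 1 (ae_of_all _ fun x => abs_cos_le_one _)
  have hF : Integrable (fun p : ℝ × ℝ => 1 + kappaFun (sin a) (p.1 + p.2)) χ :=
    .of_bound ((measurable_const.add ((measurable_kappaFun _).comp
      (measurable_fst.add measurable_snd))).aestronglyMeasurable) (1 + (1 + 2 * |sin a|))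
      (ae_of_all _ fun p => (norm_add_le _ _).trans (by simpa using abs_kappaFun_le _ _))
  have hle : ∀ᵐ p ∂χ, sin a * cos (p.1 + a / 2) + sin a * cos (p.2 + a / 2)
      ≤ 1 + kappaFun (sin a) (p.1 + p.2) := by
    filter_upwards [ae_of_ae_map measurable_fst.aemeasurable (hχ.1 ▸ ae_mem_Icc_sigmaMeasure d),
      ae_of_ae_map measurable_snd.aemeasurable (hχ.2 ▸ ae_mem_Icc_sigmaMeasure d)] with p h1 h2
    rw [← mul_add]
    exact sin_mul_add_le_one_add_kappaFun ha0 ha h1 h2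
  have h := integral_add_integral_le_of_map_eq hχ.1 hχ.2 (hcos.const_mul (sin a))
    (hcos.const_mul (sin a)) hF hle
  rw [integral_const_mul] at h
  linarith

theorem stmt18 (d : ℕ) (hd : 2 ≤ d) (Λ a : ℝ) (hΛ0 : 0 < Λ) (hΛ1 : Λ ≤ 1)
    (ha : a = Real.arcsin Λ) :
    sInf {r : ℝ | ∃ χ ∈ GammaSigmaSigma d,
        r = ∫ p, (1 + kappaFun Λ (p.1 + p.2)) ∂χ} ≥
      2 * Λ * (Real.cos (a / 2) * (ballVol d / (2 * ballVol (d - 1))) -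
        ((d : ℝ) - 1) / d * Real.sin (a / 2) - a / 2 * (a / 2 - Real.sin (a / 2))) := by
  have hsin : sin a = Λ := ha ▸ sin_arcsin (by linarith) hΛ1
  have ha0 : 0 ≤ a := ha ▸ arcsin_nonneg.2 hΛ0.le
  have haπ : a ≤ π := ha ▸ (arcsin_le_pi_div_two Λ).trans (by linarith [pi_pos])
  have := isProbabilityMeasure_sigmaMeasure hd
  have hne : {r : ℝ | ∃ χ ∈ GammaSigmaSigma d, r = ∫ p, (1 + kappaFun Λ (p.1 + p.2)) ∂χ}.Nonempty :=
    ⟨_, (sigmaMeasure d).prod (sigmaMeasure d), ⟨Measure.fst_prod, Measure.snd_prod⟩, rfl⟩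
  have htail : 0 ≤ a / 2 * (a / 2 - sin (a / 2)) :=
    mul_nonneg (by linarith) (sub_nonneg.2 (sin_le (by linarith)))
  refine le_csInf hne ?_
  rintro _ ⟨χ, hχ, rfl⟩
  have h := two_mul_sin_mul_integral_cos_le hd ha0 haπ hχ
  rw [integral_cos_add_sigmaMeasure hd, hsin] at h
  nlinarith [mul_nonneg (by linarith : 0 ≤ 2 * Λ) htail]
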